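/- arXiv:1210.0524 — 2 statements merged into one kernel-verified Lean document; each statement's English description precedes it below -/
import Mathlib

section
/- For every even m = 2r with r ≥ 1, there exists a connected graph G_m such that every spanning tree T of G_m satisfies γ_g(T) − γ_g(G_m) ≥ r − 1. Concretely, one may take G_m to be the graph obtained from a star with center x and leaves v_1,…,v_m by identifying each v_i with a vertex of its own copy of the complete graph K_n (n ≥ 3). -/
/-!
Dominator opens on the centre `x`; afterwards every legal move lies in some copy of `K_n` and
dominates all of it, so `γ_g(G_m) ≤ m + 1`.

In a spanning tree `T` the interior of each copy of `K_n` (its vertices other than `v_i`) is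
attached to the rest of `T` only through `v_i`, and since `T` has no triangle, some vertex of that
copy dominates part, but not all, of the interior (this needs `n ≥ 3`). Staller plays such a
vertex in a copy whose interior is still untouched, after which the copy needs a second move.
Hence half of the `m` copies cost two moves and `γ_g(T) ≥ 3m/2 = 3r`.
-/

open Finset

namespace DomGame

variable {V : Type*} [Fintype V] [DecidableEq V]

/-- Closed neighborhood of `v` in `G`, as a `Finset`. -/
noncomputable def cn (G : SimpleGraph V) (v : V) : Finset V :=
  haveI : DecidablePred (fun u : V => u = v ∨ G.Adj v u) := fun _ => Classical.propDecidable _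
  Finset.univ.filter (fun u : V => u = v ∨ G.Adj v u)

/-- Value (number of remaining moves, optimal play) of the domination game on `G`,
with fuel, where `D` is the set of already dominated vertices and `who = true`
means Dominator is to move (minimizing); `who = false` means Staller (maximizing). -/
noncomputable def auxVal (G : SimpleGraph V) : ℕ → Bool → Finset V → ℕ
  | 0, _, _ => 0
  | n + 1, who, D =>
    if D = Finset.univ then 0
    else
      haveI : DecidablePred (fun v : V => ¬ cn G v ⊆ D) := fun _ => Classical.propDecidable _
      let moves : Finset V := Finset.univ.filter (fun v : V => ¬ cn G v ⊆ D)
      if who then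
        WithTop.untopD 0 ((moves.image (fun v => 1 + auxVal G n false (D ∪ cn G v))).min)
      else
        moves.sup (fun v => 1 + auxVal G n true (D ∪ cn G v))

/-- Remaining moves of the domination game on the partially dominated graph `(G, D)`,
Dominator to move, both players optimal. -/
noncomputable def gVal (G : SimpleGraph V) (D : Finset V) : ℕ :=
  auxVal G (Fintype.card V) true D

/-- Remaining moves, Staller to move. -/
noncomputable def gVal' (G : SimpleGraph V) (D : Finset V) : ℕ :=
  auxVal G (Fintype.card V) false D

/-- The game domination number (Dominator starts). -/
noncomputable def gammaG (G : SimpleGraph V) : ℕ := gVal G ∅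

/-- The Staller-start game domination number. -/
noncomputable def gammaG' (G : SimpleGraph V) : ℕ := gVal' G ∅

/-- `S` is a dominating set of `G`. -/
def IsDomSet (G : SimpleGraph V) (S : Finset V) : Prop :=
  ∀ v : V, ∃ u ∈ S, u = v ∨ G.Adj u v

/-- The domination number of `G`. -/
noncomputable def gamma (G : SimpleGraph V) : ℕ :=
  sInf {n | ∃ S : Finset V, IsDomSet G S ∧ S.card = n}

end DomGame

/-- The graph obtained from a star with center `x = none` and leaves
`v_i = some (i, 0)` by identifying each `v_i` with a vertex of its own
copy of `K_n` (the clique on `{some (i, j) : j}`). -/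
def starCliques (m n : ℕ) : SimpleGraph (Option (Fin m × Fin n)) :=
  SimpleGraph.fromRel (fun a b =>
    match a, b with
    | none, some p => (p.2 : ℕ) = 0
    | some p, some q => p.1 = q.1
    | _, _ => False)

lemma WithTop.le_untopD_min {α : Type*} [LinearOrder α] (d : α) {s : Finset α} {k : α}
    (hs : s.Nonempty) (hk : ∀ a ∈ s, k ≤ a) : k ≤ WithTop.untopD d s.min := by
  rw [← coe_min' hs, WithTop.untopD_coe]
  exact le_min' s hs k hk

namespace DomGame

variable {V : Type*} [Fintype V] {G : SimpleGraph V}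

lemma mem_cn {v u : V} : u ∈ cn G v ↔ u = v ∨ G.Adj v u := by
  simp [cn]

lemma self_mem_cn (v : V) : v ∈ cn G v :=
  mem_cn.2 (Or.inl rfl)

lemma exists_not_cn_subset {D : Finset V} (hD : D ≠ univ) : ∃ v, ¬ cn G v ⊆ D := by
  obtain ⟨v, hv⟩ := not_forall.1 (mt eq_univ_iff_forall.2 hD)
  exact ⟨v, fun h => hv (h (self_mem_cn v))⟩

lemma ne_univ_of_not_cn_subset {D : Finset V} {v : V} (hv : ¬ cn G v ⊆ D) : D ≠ univ := by
  rintro rfl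
  exact hv (subset_univ _)

variable [DecidableEq V]

lemma card_univ_sdiff_union_cn_lt {D : Finset V} {v : V} (hv : ¬ cn G v ⊆ D) :
    #(univ \ (D ∪ cn G v)) < #(univ \ D) := by
  rw [card_univ_sdiff, card_univ_sdiff]
  have hlt : #D < #(D ∪ cn G v) := card_lt_card <|
    Finset.ssubset_iff_subset_ne.2 ⟨subset_union_left, fun h => hv (h ▸ subset_union_right)⟩
  have := card_le_univ (D ∪ cn G v)
  omega

lemma auxVal_univ (f : ℕ) (who : Bool) : auxVal G f who univ = 0 := by
  cases f <;> simp [auxVal]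

lemma auxVal_succ_true_le {f : ℕ} {D : Finset V} {v : V} (hv : ¬ cn G v ⊆ D) :
    auxVal G (f + 1) true D ≤ 1 + auxVal G f false (D ∪ cn G v) := by
  simp only [auxVal, ne_univ_of_not_cn_subset hv, if_false, if_true]
  exact WithTop.untopD_le (min_le (mem_image.2 ⟨v, by simpa using hv, rfl⟩))

lemma le_auxVal_succ_true {f k : ℕ} {D : Finset V} (hD : D ≠ univ)
    (hk : ∀ v, ¬ cn G v ⊆ D → k ≤ 1 + auxVal G f false (D ∪ cn G v)) :
    k ≤ auxVal G (f + 1) true D := by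
  obtain ⟨v, hv⟩ := exists_not_cn_subset (G := G) hD
  simp only [auxVal, hD, if_false, if_true]
  refine WithTop.le_untopD_min 0 ⟨_, mem_image.2 ⟨v, by simpa using hv, rfl⟩⟩ fun a ha => ?_
  obtain ⟨w, hw, rfl⟩ := mem_image.1 ha
  exact hk w (by simpa using hw)

lemma auxVal_succ_false_le {f k : ℕ} {D : Finset V} (hD : D ≠ univ)
    (hk : ∀ v, ¬ cn G v ⊆ D → 1 + auxVal G f true (D ∪ cn G v) ≤ k) :
    auxVal G (f + 1) false D ≤ k := by
  simp only [auxVal, hD, if_false, Bool.false_eq_true]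
  exact Finset.sup_le fun v hv => hk v (by simpa using hv)

lemma le_auxVal_succ_false {f : ℕ} {D : Finset V} {v : V} (hv : ¬ cn G v ⊆ D) :
    1 + auxVal G f true (D ∪ cn G v) ≤ auxVal G (f + 1) false D := by
  simp only [auxVal, ne_univ_of_not_cn_subset hv, if_false, Bool.false_eq_true]
  exact le_sup (f := fun v => 1 + auxVal G f true (D ∪ cn G v)) (by simpa using hv)

theorem auxVal_le_of_potential (P : Finset V → Prop) (Φ : Finset V → ℕ)
    (hΦ : ∀ D v, P D → ¬ cn G v ⊆ D → P (D ∪ cn G v) ∧ Φ (D ∪ cn G v) + 1 ≤ Φ D) :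
    ∀ f who D, P D → auxVal G f who D ≤ Φ D := by
  intro f
  induction f with
  | zero => simp [auxVal]
  | succ f ih =>
    intro who D hP
    by_cases hD : D = univ
    · simp [hD, auxVal_univ]
    cases who
    · refine auxVal_succ_false_le hD fun v hv => ?_
      obtain ⟨hP', hΦv⟩ := hΦ D v hP hv
      have := ih true _ hP'
      omega
    · obtain ⟨v, hv⟩ := exists_not_cn_subset (G := G) hD
      obtain ⟨hP', hΦv⟩ := hΦ D v hP hv
      have := ih false _ hP'
      have := auxVal_succ_true_le (f := f) hv
      omega

theorem le_auxVal_of_potential (Ψd Ψs : Finset V → ℕ) (hd₀ : Ψd univ = 0) (hs₀ : Ψs univ = 0)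
    (hd : ∀ D v, ¬ cn G v ⊆ D → Ψd D ≤ 1 + Ψs (D ∪ cn G v))
    (hs : ∀ D, D ≠ univ → ∃ v, ¬ cn G v ⊆ D ∧ Ψs D ≤ 1 + Ψd (D ∪ cn G v)) :
    ∀ f D, #(univ \ D) ≤ f → Ψd D ≤ auxVal G f true D ∧ Ψs D ≤ auxVal G f false D := by
  intro f
  induction f with
  | zero =>
    intro D hf
    obtain rfl : D = univ := by simpa using hf
    simp [hd₀, hs₀]
  | succ f ih =>
    intro D hf
    by_cases hD : D = univ
    · simp [hD, hd₀, hs₀]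
    have ih' : ∀ v, ¬ cn G v ⊆ D → _ := fun v hv =>
      ih (D ∪ cn G v) (by have := card_univ_sdiff_union_cn_lt hv; omega)
    constructor
    · refine le_auxVal_succ_true hD fun v hv => ?_
      have := (ih' v hv).2
      have := hd D v hv
      omega
    · obtain ⟨v, hv, hΨ⟩ := hs D hD
      have := (ih' v hv).1
      have := le_auxVal_succ_false (f := f) hv
      omega

theorem le_gammaG_of_potential (Ψd Ψs : Finset V → ℕ) (hd₀ : Ψd univ = 0) (hs₀ : Ψs univ = 0)
    (hd : ∀ D v, ¬ cn G v ⊆ D → Ψd D ≤ 1 + Ψs (D ∪ cn G v))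
    (hs : ∀ D, D ≠ univ → ∃ v, ¬ cn G v ⊆ D ∧ Ψs D ≤ 1 + Ψd (D ∪ cn G v)) :
    Ψd ∅ ≤ gammaG G :=
  (le_auxVal_of_potential Ψd Ψs hd₀ hs₀ hd hs _ ∅ (by simp)).1

end DomGame

section StarCliques

open DomGame

variable {m n : ℕ}

lemma starCliques_adj_none_some {p : Fin m × Fin n} :
    (starCliques m n).Adj none (some p) ↔ (p.2 : ℕ) = 0 := by
  simp [starCliques]

lemma starCliques_adj_some_none {p : Fin m × Fin n} :
    (starCliques m n).Adj (some p) none ↔ (p.2 : ℕ) = 0 := by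
  rw [SimpleGraph.adj_comm, starCliques_adj_none_some]

lemma starCliques_adj_some_some {p q : Fin m × Fin n} :
    (starCliques m n).Adj (some p) (some q) ↔ p ≠ q ∧ p.1 = q.1 := by
  simp only [starCliques, SimpleGraph.fromRel_adj, ne_eq, Option.some.injEq, eq_comm (a := q.1),
    or_self]

lemma some_mem_cn_starCliques_some (p : Fin m × Fin n) (j : Fin n) :
    some (p.1, j) ∈ cn (starCliques m n) (some p) := by
  rcases eq_or_ne (p.1, j) p with h | h
  · exact mem_cn.2 (Or.inl (by rw [h]))
  · exact mem_cn.2 (Or.inr (starCliques_adj_some_some.2 ⟨h.symm, rfl⟩))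

theorem starCliques_connected (m n : ℕ) : (starCliques m n).Connected := by
  have hreach : ∀ u, (starCliques m n).Reachable u none := by
    rintro (_ | p)
    · rfl
    by_cases hp : (p.2 : ℕ) = 0
    · exact (starCliques_adj_some_none.2 hp).reachable
    · have hleaf : (starCliques m n).Adj (some p) (some (p.1, ⟨0, Fin.pos p.2⟩)) :=
        starCliques_adj_some_some.2 ⟨fun h => hp (by rw [h]), rfl⟩
      exact hleaf.reachable.trans (starCliques_adj_some_none.2 rfl).reachable
  exact ⟨fun u v => (hreach u).trans (hreach v).symm⟩

def undominatedCliques (D : Finset (Option (Fin m × Fin n))) : Finset (Fin m) :=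
  {i | ∃ j, some (i, j) ∉ D}

lemma card_undominatedCliques_union_cn_lt {D : Finset (Option (Fin m × Fin n))}
    {v : Option (Fin m × Fin n)} (hD : cn (starCliques m n) none ⊆ D)
    (hv : ¬ cn (starCliques m n) v ⊆ D) :
    #(undominatedCliques (D ∪ cn (starCliques m n) v)) < #(undominatedCliques D) := by
  obtain _ | p := v
  · exact absurd hD hv
  obtain ⟨w, hw, hwD⟩ := not_subset.1 hv
  have hmono : undominatedCliques (D ∪ cn (starCliques m n) (some p)) ⊆ undominatedCliques D := by
    simp only [undominatedCliques, subset_iff, mem_filter, mem_univ, true_and, mem_union]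
    exact fun i ⟨j, hj⟩ => ⟨j, fun h => hj (Or.inl h)⟩
  refine card_lt_card ((ssubset_iff_of_subset hmono).2 ⟨p.1, ?_, ?_⟩)
  · obtain _ | q := w
    · exact absurd (hD (self_mem_cn none)) hwD
    have hq : q.1 = p.1 := by
      obtain h | hadj := mem_cn.1 hw
      · rw [Option.some_injective _ h]
      · exact (starCliques_adj_some_some.1 hadj).2.symm
    simp only [undominatedCliques, mem_filter, mem_univ, true_and]
    exact ⟨q.2, by rw [← hq]; exact hwD⟩
  · simp [undominatedCliques, some_mem_cn_starCliques_some]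

theorem gammaG_starCliques_le (m n : ℕ) : gammaG (starCliques m n) ≤ m + 1 := by
  have hstart : ¬ cn (starCliques m n) none ⊆ ∅ := fun h => by simpa using h (self_mem_cn none)
  have hcount := auxVal_le_of_potential (fun D => cn (starCliques m n) none ⊆ D)
    (fun D => #(undominatedCliques D)) (fun D v hD hv => ⟨hD.trans subset_union_left,
      card_undominatedCliques_union_cn_lt hD hv⟩) (Fintype.card (Fin m × Fin n)) false
    (∅ ∪ cn (starCliques m n) none) subset_union_right
  have hm := card_le_univ (undominatedCliques (∅ ∪ cn (starCliques m n) none))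
  rw [Fintype.card_fin] at hm
  rw [gammaG, gVal, Fintype.card_option]
  have := auxVal_succ_true_le (f := Fintype.card (Fin m × Fin n)) hstart
  omega

end StarCliques

section SpanningTree

open DomGame

variable {m n : ℕ} {T : SimpleGraph (Option (Fin m × Fin n))}

def Touched (S : Finset (Option (Fin m × Fin n))) (i : Fin m) : Prop :=
  ∃ j : Fin n, (j : ℕ) ≠ 0 ∧ some (i, j) ∈ S

def Finished (S : Finset (Option (Fin m × Fin n))) (i : Fin m) : Prop :=
  ∀ j : Fin n, (j : ℕ) ≠ 0 → some (i, j) ∈ S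

lemma Touched.mono {S S' : Finset (Option (Fin m × Fin n))} {i : Fin m} (h : S ⊆ S')
    (hS : Touched S i) : Touched S' i :=
  let ⟨j, hj, hjS⟩ := hS
  ⟨j, hj, h hjS⟩

open Classical in
noncomputable def untouched (D : Finset (Option (Fin m × Fin n))) : Finset (Fin m) :=
  {i | ¬ Touched D i}

open Classical in
noncomputable def started (D : Finset (Option (Fin m × Fin n))) : Finset (Fin m) :=
  {i | Touched D i ∧ ¬ Finished D i}

lemma mem_untouched {D : Finset (Option (Fin m × Fin n))} {i : Fin m} :
    i ∈ untouched D ↔ ¬ Touched D i := by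
  simp [untouched]

lemma mem_started {D : Finset (Option (Fin m × Fin n))} {i : Fin m} :
    i ∈ started D ↔ Touched D i ∧ ¬ Finished D i := by
  simp [started]

lemma untouched_anti {D D' : Finset (Option (Fin m × Fin n))} (h : D ⊆ D') :
    untouched D' ⊆ untouched D := fun _ hi =>
  mem_untouched.2 fun ht => mem_untouched.1 hi (ht.mono h)

lemma untouched_empty : untouched (∅ : Finset (Option (Fin m × Fin n))) = univ := by
  ext i
  simp [mem_untouched, Touched]

lemma started_empty : started (∅ : Finset (Option (Fin m × Fin n))) = ∅ := by
  ext i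
  simp [mem_started, Touched]

lemma untouched_univ (hn : 2 ≤ n) : untouched (univ : Finset (Option (Fin m × Fin n))) = ∅ := by
  ext i
  simpa [mem_untouched, Touched] using ⟨⟨1, hn⟩, one_ne_zero⟩

lemma started_univ : started (univ : Finset (Option (Fin m × Fin n))) = ∅ := by
  ext i
  simp [mem_started, Finished]

/-- Each untouched clique still needs a move, each started one as well; Staller can turn half of
the untouched cliques (rounded up when she is to move) into started ones, which need two. -/
noncomputable def dominatorPotential (D : Finset (Option (Fin m × Fin n))) : ℕ :=
  #(untouched D) + #(started D) + #(untouched D) / 2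

noncomputable def stallerPotential (D : Finset (Option (Fin m × Fin n))) : ℕ :=
  #(untouched D) + #(started D) + (#(untouched D) + 1) / 2

def cliqueOf : Option (Fin m × Fin n) → Finset (Fin m)
  | none => ∅
  | some p => {p.1}

lemma card_cliqueOf_le (v : Option (Fin m × Fin n)) : #(cliqueOf v) ≤ 1 := by
  cases v <;> simp [cliqueOf]

lemma mem_cliqueOf_of_mem_cn (hT : T ≤ starCliques m n) {v : Option (Fin m × Fin n)}
    {i : Fin m} {j : Fin n} (hj : (j : ℕ) ≠ 0) (h : some (i, j) ∈ cn T v) : i ∈ cliqueOf v := by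
  obtain h | hadj := mem_cn.1 h
  · simp [← h, cliqueOf]
  · obtain _ | q := v
    · exact absurd (starCliques_adj_none_some.1 (hT hadj)) hj
    · simp [cliqueOf, (starCliques_adj_some_some.1 (hT hadj)).2]

lemma some_mem_union_cn_iff (hT : T ≤ starCliques m n) {D : Finset (Option (Fin m × Fin n))}
    {v : Option (Fin m × Fin n)} {i : Fin m} (hi : i ∉ cliqueOf v) {j : Fin n}
    (hj : (j : ℕ) ≠ 0) : some (i, j) ∈ D ∪ cn T v ↔ some (i, j) ∈ D := by
  rw [mem_union, or_iff_left fun h => hi (mem_cliqueOf_of_mem_cn hT hj h)]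

lemma touched_union_cn_iff (hT : T ≤ starCliques m n) {D : Finset (Option (Fin m × Fin n))}
    {v : Option (Fin m × Fin n)} {i : Fin m} (hi : i ∉ cliqueOf v) :
    Touched (D ∪ cn T v) i ↔ Touched D i :=
  exists_congr fun _ => and_congr_right fun hj => some_mem_union_cn_iff hT hi hj

lemma finished_union_cn_iff (hT : T ≤ starCliques m n) {D : Finset (Option (Fin m × Fin n))}
    {v : Option (Fin m × Fin n)} {i : Fin m} (hi : i ∉ cliqueOf v) :
    Finished (D ∪ cn T v) i ↔ Finished D i :=
  forall_congr' fun _ => forall_congr' fun hj => some_mem_union_cn_iff hT hi hj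

lemma untouched_sdiff_cliqueOf_subset (hT : T ≤ starCliques m n)
    (D : Finset (Option (Fin m × Fin n))) (v : Option (Fin m × Fin n)) :
    untouched D \ cliqueOf v ⊆ untouched (D ∪ cn T v) := by
  intro i hi
  rw [mem_sdiff, mem_untouched] at hi
  rw [mem_untouched, touched_union_cn_iff hT hi.2]
  exact hi.1

lemma started_sdiff_cliqueOf_subset (hT : T ≤ starCliques m n)
    (D : Finset (Option (Fin m × Fin n))) (v : Option (Fin m × Fin n)) :
    started D \ cliqueOf v ⊆ started (D ∪ cn T v) := by
  intro i hi
  rw [mem_sdiff, mem_started] at hi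
  rw [mem_started, touched_union_cn_iff hT hi.2, finished_union_cn_iff hT hi.2]
  exact hi.1

lemma card_le_card_add_one_of_sdiff_cliqueOf_subset {A B : Finset (Fin m)}
    {v : Option (Fin m × Fin n)} (h : A \ cliqueOf v ⊆ B) : #A ≤ #B + 1 :=
  card_le_card_sdiff_add_card.trans (add_le_add (card_le_card h) (card_cliqueOf_le v))

lemma started_subset_of_card_untouched_lt (hT : T ≤ starCliques m n)
    {D : Finset (Option (Fin m × Fin n))} {v : Option (Fin m × Fin n)}
    (h : #(untouched (D ∪ cn T v)) < #(untouched D)) : started D ⊆ started (D ∪ cn T v) := by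
  obtain ⟨i, hi, hi'⟩ := exists_mem_notMem_of_card_lt_card h
  have hiv : i ∈ cliqueOf v := by
    by_contra hiv
    exact hi' (untouched_sdiff_cliqueOf_subset hT D v (mem_sdiff.2 ⟨hi, hiv⟩))
  refine fun k hk => started_sdiff_cliqueOf_subset hT D v (mem_sdiff.2 ⟨hk, fun hkv => ?_⟩)
  rw [card_le_one.1 (card_cliqueOf_le v) k hkv i hiv] at hk
  exact mem_untouched.1 hi (mem_started.1 hk).1

lemma dominatorPotential_le (hT : T ≤ starCliques m n) (D : Finset (Option (Fin m × Fin n)))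
    (v : Option (Fin m × Fin n)) :
    dominatorPotential D ≤ 1 + stallerPotential (D ∪ cn T v) := by
  have hU := card_le_card (untouched_anti (subset_union_left (s₂ := cn T v) (s₁ := D)))
  have hU' := card_le_card_add_one_of_sdiff_cliqueOf_subset (untouched_sdiff_cliqueOf_subset hT D v)
  have hW := card_le_card_add_one_of_sdiff_cliqueOf_subset (started_sdiff_cliqueOf_subset hT D v)
  have hW' := fun h => card_le_card (started_subset_of_card_untouched_lt hT (v := v) (D := D) h)
  unfold dominatorPotential stallerPotential
  omega

lemma exists_adj_leaf_interior (hT : T ≤ starCliques m n) (hconn : T.Connected) (hn : 2 ≤ n)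
    (i : Fin m) : ∃ a : Fin n, (a : ℕ) ≠ 0 ∧ T.Adj (some (i, ⟨0, by omega⟩)) (some (i, a)) := by
  let S : Set (Option (Fin m × Fin n)) := {u | ∃ j : Fin n, (j : ℕ) ≠ 0 ∧ u = some (i, j)}
  obtain ⟨d, -, ⟨a, ha, hfst⟩, hsnd⟩ := (hconn.preconnected (some (i, ⟨1, hn⟩)) none).some
    |>.exists_boundary_dart S ⟨⟨1, hn⟩, one_ne_zero, rfl⟩ (by simp [S])
  have hadj : T.Adj (some (i, a)) d.snd := hfst ▸ d.adj
  rcases hsnd' : d.snd with _ | ⟨i', j'⟩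
  · rw [hsnd'] at hadj
    exact absurd (starCliques_adj_some_none.1 (hT hadj)) ha
  rw [hsnd'] at hadj hsnd
  obtain rfl : i = i' := (starCliques_adj_some_some.1 (hT hadj)).2
  have hj' : (j' : ℕ) = 0 := by
    by_contra hj'
    exact hsnd ⟨j', hj', rfl⟩
  obtain rfl : j' = ⟨0, two_pos.trans_le hn⟩ := Fin.ext hj'
  exact ⟨a, ha, hadj.symm⟩

lemma exists_touched_not_finished (hT : T ≤ starCliques m n) (hTree : T.IsTree) (hn : 3 ≤ n)
    (i : Fin m) :
    ∃ j : Fin n, Touched (cn T (some (i, j))) i ∧ ¬ Finished (cn T (some (i, j))) i := by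
  have hfree := hTree.isAcyclic.cliqueFree le_rfl
  obtain ⟨a, ha, hℓa⟩ := exists_adj_leaf_interior hT hTree.connected (by omega) i
  obtain ⟨b, hb, hba⟩ : ∃ b : Fin n, (b : ℕ) ≠ 0 ∧ b ≠ a := by
    by_cases ha1 : (a : ℕ) = 1
    · exact ⟨⟨2, hn⟩, two_ne_zero, fun h => by simp [← h] at ha1⟩
    · exact ⟨⟨1, by omega⟩, one_ne_zero, fun h => ha1 (by simp [← h])⟩
  by_cases hℓb : T.Adj (some (i, ⟨0, by omega⟩)) (some (i, b))
  · -- `a`, `b` and the leaf would form a triangle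
    refine ⟨a, ⟨a, ha, self_mem_cn _⟩, fun hfin => ?_⟩
    obtain h | hab := mem_cn.1 (hfin b hb)
    · exact hba (by simpa using h)
    · exact hfree _ (SimpleGraph.is3Clique_triple_iff.2 ⟨hℓa, hℓb, hab⟩)
  · refine ⟨⟨0, by omega⟩, ⟨a, ha, mem_cn.2 (Or.inr hℓa)⟩, fun hfin => ?_⟩
    obtain h | h := mem_cn.1 (hfin b hb)
    · exact hb (by simpa [Fin.ext_iff] using h)
    · exact hℓb h

lemma exists_stallerPotential_le (hT : T ≤ starCliques m n) (hTree : T.IsTree) (hn : 3 ≤ n)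
    {D : Finset (Option (Fin m × Fin n))} (hD : D ≠ univ) :
    ∃ v, ¬ cn T v ⊆ D ∧ stallerPotential D ≤ 1 + dominatorPotential (D ∪ cn T v) := by
  unfold stallerPotential dominatorPotential
  obtain hU | ⟨i, hi⟩ := (untouched D).eq_empty_or_nonempty
  · obtain ⟨v, hv⟩ := exists_not_cn_subset (G := T) hD
    have hW := card_le_card_add_one_of_sdiff_cliqueOf_subset
      (started_sdiff_cliqueOf_subset hT D v)
    refine ⟨v, hv, ?_⟩
    rw [hU]
    simp only [card_empty]
    omega
  obtain ⟨j, htouch, hfin⟩ := exists_touched_not_finished hT hTree hn i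
  set v := some (i, j)
  have hi' : i ∉ untouched (D ∪ cn T v) := fun h =>
    mem_untouched.1 h (htouch.mono subset_union_right)
  obtain ⟨a, ha, haN⟩ := htouch
  have hlegal : ¬ cn T v ⊆ D := fun h => mem_untouched.1 hi ⟨a, ha, h haN⟩
  have hUlt : #(untouched (D ∪ cn T v)) < #(untouched D) :=
    card_lt_card ((ssubset_iff_of_subset (untouched_anti subset_union_left)).2 ⟨i, hi, hi'⟩)
  have hU := card_le_card_add_one_of_sdiff_cliqueOf_subset (untouched_sdiff_cliqueOf_subset hT D v)
  have hi_started : i ∈ started (D ∪ cn T v) := by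
    refine mem_started.2 ⟨⟨a, ha, mem_union_right _ haN⟩, fun hfin' => hfin fun b hb => ?_⟩
    obtain h | h := mem_union.1 (hfin' b hb)
    · exact absurd ⟨b, hb, h⟩ (mem_untouched.1 hi)
    · exact h
  have hWlt : #(started D) < #(started (D ∪ cn T v)) :=
    card_lt_card ((ssubset_iff_of_subset (started_subset_of_card_untouched_lt hT hUlt)).2
      ⟨i, hi_started, fun h => mem_untouched.1 hi (mem_started.1 h).1⟩)
  exact ⟨v, hlegal, by omega⟩

theorem le_gammaG_of_isTree (hT : T ≤ starCliques m n) (hTree : T.IsTree) (hn : 3 ≤ n) :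
    m + m / 2 ≤ gammaG T := by
  have h := le_gammaG_of_potential dominatorPotential stallerPotential
    (by simp [dominatorPotential, untouched_univ (m := m) (by omega : 2 ≤ n), started_univ])
    (by simp [stallerPotential, untouched_univ (m := m) (by omega : 2 ≤ n), started_univ])
    (fun D v _ => dominatorPotential_le hT D v)
    (fun _ hD => exists_stallerPotential_le hT hTree hn hD)
  simpa [dominatorPotential, untouched_empty, started_empty] using h

end SpanningTree

/-- for m = 2r (r ≥ 1) and any n ≥ 3, the graph `starCliques (2r) n`
is connected and every spanning tree T of it satisfies γ_g(T) − γ_g(G) ≥ r − 1. -/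
theorem stmt15 (r n : ℕ) (hr : 1 ≤ r) (hn : 3 ≤ n) :
    (starCliques (2 * r) n).Connected ∧
      ∀ T : SimpleGraph (Option (Fin (2 * r) × Fin n)),
        T ≤ starCliques (2 * r) n → T.IsTree →
          DomGame.gammaG (starCliques (2 * r) n) + (r - 1) ≤ DomGame.gammaG T := by
  refine ⟨starCliques_connected _ _, fun T hT hTree => ?_⟩
  have hupper := gammaG_starCliques_le (2 * r) n
  have hlower := le_gammaG_of_isTree hT hTree hn
  omega
end

section
/- Let G_m (for m ≥ 3) be the graph constructed as follows: for 1 ≤ i ≤ m the set X_i = {a_{i,1},…,a_{i,m}, x_i, y_i} induces a complete graph K_{m+2}; the set {x_1,y_1,…,x_m,y_m} induces K_{2m}; and for 1 ≤ i ≤ j ≤ m−1 the edge a_{i,j} a_{j+1,i} is present. Let H_m be the spanning subgraph obtained by removing all edges a_{i,j} a_{j+1,i}. Then γ_g(H_m) = m. -/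
open Finset

/-- The graph `H_m`: vertex set `Fin m × Fin (m+2)`, where
`X_i = {(i, j) : j}` (with `x_i = (i, m)`, `y_i = (i, m+1)`, `a_{i,j} = (i, j-1)`
for `1 ≤ j ≤ m`) induces `K_{m+2}` and `{x_1, y_1, …, x_m, y_m}` induces `K_{2m}`,
with no other edges. -/
def Hgraph (m : ℕ) : SimpleGraph (Fin m × Fin (m + 2)) :=
  SimpleGraph.fromRel (fun a b =>
    a.1 = b.1 ∨ (m ≤ (a.2 : ℕ) ∧ m ≤ (b.2 : ℕ)))

open DomGame

namespace Stmt17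

/-- The dominated set corresponding to game state `(S, t)`:
cliques `X_i` for `i ∈ S` are dominated, plus the top part `T` if `t`. -/
def DS (m : ℕ) (S : Finset (Fin m)) (t : Bool) : Finset (Fin m × Fin (m + 2)) :=
  Finset.univ.filter (fun p => p.1 ∈ S ∨ (t = true ∧ m ≤ (p.2 : ℕ)))

lemma mem_DS (m : ℕ) {S : Finset (Fin m)} {t : Bool} {p : Fin m × Fin (m + 2)} :
    p ∈ DS m S t ↔ p.1 ∈ S ∨ (t = true ∧ m ≤ (p.2 : ℕ)) := by
  simp [DS]

lemma cn_eq (m : ℕ) (v : Fin m × Fin (m + 2)) :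
    cn (Hgraph m) v =
      Finset.univ.filter (fun p : Fin m × Fin (m + 2) =>
        p.1 = v.1 ∨ (m ≤ (v.2 : ℕ) ∧ m ≤ (p.2 : ℕ))) := by
  ext u
  simp only [cn, Hgraph, SimpleGraph.fromRel_adj, Finset.mem_filter, Finset.mem_univ, true_and]
  constructor
  · rintro (rfl | ⟨-, (h | h) | (h | h)⟩)
    · exact Or.inl rfl
    · exact Or.inl h.symm
    · exact Or.inr h
    · exact Or.inl h
    · exact Or.inr ⟨h.2, h.1⟩
  · intro h
    by_cases huv : u = v
    · exact Or.inl huv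
    · refine Or.inr ⟨fun e => huv e.symm, ?_⟩
      rcases h with h | h
      · exact Or.inl (Or.inl h.symm)
      · exact Or.inl (Or.inr h)

lemma DS_union_cn (m : ℕ) (S : Finset (Fin m)) (t : Bool) (v : Fin m × Fin (m + 2)) :
    DS m S t ∪ cn (Hgraph m) v = DS m (insert v.1 S) (t || decide (m ≤ (v.2 : ℕ))) := by
  ext p
  simp only [Finset.mem_union, mem_DS, cn_eq, Finset.mem_filter, Finset.mem_univ, true_and,
    Finset.mem_insert, Bool.or_eq_true, decide_eq_true_eq]
  tauto

lemma DS_univ_eq (m : ℕ) (t : Bool) : DS m Finset.univ t = Finset.univ := by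
  ext p; simp [mem_DS]

lemma DS_eq_univ_iff (m : ℕ) (hm : 1 ≤ m) {S : Finset (Fin m)} {t : Bool} :
    DS m S t = Finset.univ ↔ S = Finset.univ := by
  constructor
  · intro h
    ext i
    simp only [Finset.mem_univ, iff_true]
    have hmem : (⟨i, ⟨0, by omega⟩⟩ : Fin m × Fin (m + 2)) ∈ DS m S t :=
      Finset.eq_univ_iff_forall.1 h _
    rcases (mem_DS m).1 hmem with h1 | ⟨_, h2⟩
    · exact h1
    · simp at h2; omega
  · rintro rfl; exact DS_univ_eq m t

lemma cn_subset_iff (m : ℕ) (hm : 1 ≤ m) {S : Finset (Fin m)} (hS : S ≠ Finset.univ)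
    (t : Bool) (v : Fin m × Fin (m + 2)) :
    cn (Hgraph m) v ⊆ DS m S t ↔ (v.1 ∈ S ∧ (m ≤ (v.2 : ℕ) → t = true)) := by
  rw [cn_eq]
  constructor
  · intro h
    constructor
    · have hv := h (Finset.mem_filter.2 ⟨Finset.mem_univ _, Or.inl rfl⟩ :
        (⟨v.1, ⟨0, by omega⟩⟩ : Fin m × Fin (m + 2)) ∈ _)
      rcases (mem_DS m).1 hv with h1 | ⟨_, h2⟩
      · exact h1
      · simp at h2; omega
    · intro hv2
      by_contra ht
      apply hS
      ext i
      simp only [Finset.mem_univ, iff_true]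
      have hi := h (Finset.mem_filter.2 ⟨Finset.mem_univ _, Or.inr ⟨hv2, by simp⟩⟩ :
        (⟨i, ⟨m, by omega⟩⟩ : Fin m × Fin (m + 2)) ∈ _)
      rcases (mem_DS m).1 hi with h1 | ⟨h2, _⟩
      · exact h1
      · exact absurd h2 ht
  · rintro ⟨h1, h2⟩ p hp
    rcases Finset.mem_filter.1 hp with ⟨-, he | ⟨ha, hb⟩⟩
    · exact (mem_DS m).2 (Or.inl (by rw [he]; exact h1))
    · exact (mem_DS m).2 (Or.inr ⟨h2 ha, hb⟩)

lemma auxVal_univ {V : Type*} [Fintype V] [DecidableEq V] (G : SimpleGraph V)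
    (n : ℕ) (who : Bool) : auxVal G n who Finset.univ = 0 := by
  cases n with
  | zero => rw [auxVal]
  | succ n => rw [auxVal]; simp

lemma untop'_min {α : Type*} {s : Finset α} {f : α → ℕ} {c : ℕ}
    (h1 : ∃ a ∈ s, f a = c) (h2 : ∀ a ∈ s, c ≤ f a) :
    WithTop.untopD 0 ((s.image f).min) = c := by
  obtain ⟨a, ha, hfa⟩ := h1
  have hmin : (s.image f).min = (c : WithTop ℕ) := by
    apply le_antisymm
    · exact hfa ▸ Finset.min_le (Finset.mem_image_of_mem f ha)
    · apply Finset.le_min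
      intro b hb
      obtain ⟨x, hx, rfl⟩ := Finset.mem_image.1 hb
      exact WithTop.coe_le_coe.2 (h2 x hx)
  rw [hmin]; rfl

lemma sup_eq {α : Type*} {s : Finset α} {f : α → ℕ} {c : ℕ}
    (h1 : ∃ a ∈ s, f a = c) (h2 : ∀ a ∈ s, f a ≤ c) : s.sup f = c := by
  obtain ⟨a, ha, hfa⟩ := h1
  exact le_antisymm (Finset.sup_le h2) (hfa ▸ Finset.le_sup ha)


lemma auxVal_succ {V : Type*} [Fintype V] [DecidableEq V] (G : SimpleGraph V) (n : ℕ)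
    (who : Bool) (D : Finset V) (hD : D ≠ Finset.univ) :
    auxVal G (n+1) who D =
      if who then
        WithTop.untopD 0 (((Finset.univ.filter (fun v => ¬ cn G v ⊆ D)).image
          (fun v => 1 + auxVal G n false (D ∪ cn G v))).min)
      else
        (Finset.univ.filter (fun v => ¬ cn G v ⊆ D)).sup
          (fun v => 1 + auxVal G n true (D ∪ cn G v)) := by
  rw [auxVal, if_neg hD]
  show (if who = true then
      WithTop.untopD 0 ((Finset.image (fun v => 1 + auxVal G n false (D ∪ cn G v))
        (@Finset.filter V (fun v => ¬cn G v ⊆ D)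
          (fun x => Classical.propDecidable _) Finset.univ)).min)
    else (@Finset.filter V (fun v => ¬cn G v ⊆ D)
          (fun x => Classical.propDecidable _) Finset.univ).sup
        fun v => 1 + auxVal G n true (D ∪ cn G v)) = _
  have hf : (@Finset.filter V (fun v => ¬cn G v ⊆ D)
      (fun x => Classical.propDecidable _) Finset.univ)
      = Finset.univ.filter (fun v => ¬cn G v ⊆ D) := Finset.filter_congr_decidable _ _ _
  rw [hf]

lemma main (m : ℕ) (hm : 3 ≤ m) : ∀ n : ℕ, ∀ S : Finset (Fin m), S ≠ Finset.univ →
    ((m - S.card ≤ n → ∀ who : Bool,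
        auxVal (Hgraph m) n who (DS m S true) = m - S.card) ∧
     (m - S.card + 1 ≤ n →
        auxVal (Hgraph m) n true (DS m S false) = m - S.card ∧
        auxVal (Hgraph m) n false (DS m S false)
          = if S = ∅ then m else m - S.card + 1)) := by
  have hm1 : 1 ≤ m := by omega
  intro n
  induction n with
  | zero =>
    intro S hS
    have hcard : S.card < m := by
      have h := Finset.card_lt_card (Finset.ssubset_univ_iff.mpr hS)
      simpa using h
    exact ⟨fun h => by omega, fun h => by omega⟩
  | succ n IH =>
    intro S hS
    have hcard : S.card < m := by
      have h := Finset.card_lt_card (Finset.ssubset_univ_iff.mpr hS)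
      simpa using h
    have hDne : ∀ t : Bool, DS m S t ≠ Finset.univ :=
      fun t h => hS ((DS_eq_univ_iff m hm1).1 h)
    obtain ⟨i0, hi0⟩ : ∃ i : Fin m, i ∉ S := by
      by_contra h; push_neg at h; exact hS (Finset.eq_univ_iff_forall.2 h)
    -- value after any move into a fresh clique that also dominates the top part
    have step : ∀ i : Fin m, i ∉ S → m - S.card ≤ n + 1 → ∀ w : Bool,
        1 + auxVal (Hgraph m) n w (DS m (insert i S) true) = m - S.card := by
      intro i hi hn w
      by_cases hins : insert i S = Finset.univ
      · have hc := congrArg Finset.card hins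
        rw [Finset.card_insert_of_notMem hi, Finset.card_univ, Fintype.card_fin] at hc
        rw [hins, DS_univ_eq, auxVal_univ]
        omega
      · have hc : (insert i S).card = S.card + 1 := Finset.card_insert_of_notMem hi
        rw [(IH (insert i S) hins).1 (by omega) w, hc]
        omega
    constructor
    · -- t = true : every legal move hits a fresh clique, value m - |S|
      intro hn who
      have hlegal : ∀ v : Fin m × Fin (m + 2),
          ¬ cn (Hgraph m) v ⊆ DS m S true → v.1 ∉ S := by
        intro v hv h
        exact hv ((cn_subset_iff m hm1 hS true v).2 ⟨h, fun _ => rfl⟩)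
      have hval : ∀ (w : Bool) (v : Fin m × Fin (m + 2)),
          ¬ cn (Hgraph m) v ⊆ DS m S true →
          1 + auxVal (Hgraph m) n w (DS m S true ∪ cn (Hgraph m) v) = m - S.card := by
        intro w v hv
        rw [DS_union_cn, Bool.true_or]
        exact step v.1 (hlegal v hv) hn w
      have hmem0 : (⟨i0, ⟨0, by omega⟩⟩ : Fin m × Fin (m + 2)) ∈
          Finset.univ.filter (fun v => ¬ cn (Hgraph m) v ⊆ DS m S true) := by
        refine Finset.mem_filter.2 ⟨Finset.mem_univ _, fun h => ?_⟩
        exact hi0 ((cn_subset_iff m hm1 hS true _).1 h).1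
      cases who with
      | true =>
        rw [auxVal_succ _ _ _ _ (hDne true), if_pos rfl]
        refine untop'_min ⟨_, hmem0, hval false _ (Finset.mem_filter.1 hmem0).2⟩ ?_
        intro a ha
        rw [hval false a (Finset.mem_filter.1 ha).2]
      | false =>
        rw [auxVal_succ _ _ _ _ (hDne true), if_neg (by simp)]
        refine sup_eq ⟨_, hmem0, hval true _ (Finset.mem_filter.1 hmem0).2⟩ ?_
        intro a ha
        rw [hval true a (Finset.mem_filter.1 ha).2]
    · -- t = false
      intro hn
      have hlegal2 : ∀ v : Fin m × Fin (m + 2),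
          ¬ cn (Hgraph m) v ⊆ DS m S false → v.1 ∉ S ∨ m ≤ ((v.2 : ℕ)) := by
        intro v hv
        by_cases h1 : v.1 ∈ S
        · by_cases h2 : m ≤ (v.2 : ℕ)
          · exact Or.inr h2
          · exact absurd ((cn_subset_iff m hm1 hS false v).2
              ⟨h1, fun h => absurd h h2⟩) hv
        · exact Or.inl h1
      constructor
      · -- Dominator to move: value m - |S|
        rw [auxVal_succ _ _ _ _ (hDne false), if_pos rfl]
        have hmem1 : (⟨i0, ⟨m, by omega⟩⟩ : Fin m × Fin (m + 2)) ∈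
            Finset.univ.filter (fun v => ¬ cn (Hgraph m) v ⊆ DS m S false) := by
          refine Finset.mem_filter.2 ⟨Finset.mem_univ _, fun h => ?_⟩
          exact hi0 ((cn_subset_iff m hm1 hS false _).1 h).1
        refine untop'_min ⟨_, hmem1, ?_⟩ ?_
        · rw [DS_union_cn, show (false || decide (m ≤ (((⟨m, by omega⟩ : Fin (m + 2))) : ℕ)))
            = true by simp]
          exact step i0 hi0 (by omega) false
        · intro a ha
          have hv := (Finset.mem_filter.1 ha).2
          rw [DS_union_cn]
          by_cases h1 : a.1 ∈ S
          · have h2 : m ≤ (a.2 : ℕ) := by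
              rcases hlegal2 a hv with h | h
              · exact absurd h1 h
              · exact h
            rw [Finset.insert_eq_self.2 h1,
              show (false || decide (m ≤ (a.2 : ℕ))) = true by simp [h2]]
            rw [(IH S hS).1 (by omega) false]
            omega
          · by_cases hins : insert a.1 S = Finset.univ
            · have hc := congrArg Finset.card hins
              rw [Finset.card_insert_of_notMem h1, Finset.card_univ, Fintype.card_fin] at hc
              rw [hins, DS_univ_eq, auxVal_univ]
              omega
            · have hc : (insert a.1 S).card = S.card + 1 := Finset.card_insert_of_notMem h1
              by_cases h2 : m ≤ (a.2 : ℕ)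
              · rw [show (false || decide (m ≤ (a.2 : ℕ))) = true by simp [h2]]
                rw [(IH _ hins).1 (by omega) false, hc]
                omega
              · rw [show (false || decide (m ≤ (a.2 : ℕ))) = false by simp [h2]]
                rw [((IH _ hins).2 (by omega)).2]
                rw [if_neg (Finset.insert_ne_empty _ _), hc]
                omega
      · -- Staller to move
        rw [auxVal_succ _ _ _ _ (hDne false), if_neg (by simp)]
        by_cases hSe : S = ∅
        · subst hSe
          rw [if_pos rfl]
          simp only [Finset.card_empty] at hn
          have hval : ∀ v : Fin m × Fin (m + 2),
              ¬ cn (Hgraph m) v ⊆ DS m ∅ false →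
              1 + auxVal (Hgraph m) n true (DS m ∅ false ∪ cn (Hgraph m) v) = m := by
            intro v hv
            have h1 : v.1 ∉ (∅ : Finset (Fin m)) := Finset.notMem_empty _
            rw [DS_union_cn]
            by_cases h2 : m ≤ (v.2 : ℕ)
            · rw [show (false || decide (m ≤ (v.2 : ℕ))) = true by simp [h2]]
              have h := step v.1 h1 (by omega) true
              simpa using h
            · rw [show (false || decide (m ≤ (v.2 : ℕ))) = false by simp [h2]]
              have hc : (insert v.1 (∅ : Finset (Fin m))).card = 1 := by simp
              have hins : insert v.1 (∅ : Finset (Fin m)) ≠ Finset.univ := by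
                intro h
                have hc2 := congrArg Finset.card h
                rw [hc, Finset.card_univ, Fintype.card_fin] at hc2
                omega
              rw [((IH _ hins).2 (by omega)).1, hc]
              omega
          have hmem0 : (⟨i0, ⟨0, by omega⟩⟩ : Fin m × Fin (m + 2)) ∈
              Finset.univ.filter (fun v => ¬ cn (Hgraph m) v ⊆ DS m ∅ false) := by
            refine Finset.mem_filter.2 ⟨Finset.mem_univ _, fun h => ?_⟩
            exact hi0 ((cn_subset_iff m hm1 hS false _).1 h).1
          refine sup_eq ⟨_, hmem0, hval _ (Finset.mem_filter.1 hmem0).2⟩ ?_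
          intro a ha
          rw [hval a (Finset.mem_filter.1 ha).2]
        · rw [if_neg hSe]
          obtain ⟨i1, hi1⟩ := Finset.nonempty_iff_ne_empty.2 hSe
          have hmemW : (⟨i1, ⟨m, by omega⟩⟩ : Fin m × Fin (m + 2)) ∈
              Finset.univ.filter (fun v => ¬ cn (Hgraph m) v ⊆ DS m S false) := by
            refine Finset.mem_filter.2 ⟨Finset.mem_univ _, fun h => ?_⟩
            have h2 := ((cn_subset_iff m hm1 hS false _).1 h).2 (le_refl m)
            simp at h2
          refine sup_eq ⟨_, hmemW, ?_⟩ ?_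
          · rw [DS_union_cn, Finset.insert_eq_self.2 hi1,
              show (false || decide (m ≤ (((⟨m, by omega⟩ : Fin (m + 2))) : ℕ)))
                = true by simp]
            rw [(IH S hS).1 (by omega) true]
            omega
          · intro a ha
            have hv := (Finset.mem_filter.1 ha).2
            rw [DS_union_cn]
            by_cases h1 : a.1 ∈ S
            · have h2 : m ≤ (a.2 : ℕ) := by
                rcases hlegal2 a hv with h | h
                · exact absurd h1 h
                · exact h
              rw [Finset.insert_eq_self.2 h1,
                show (false || decide (m ≤ (a.2 : ℕ))) = true by simp [h2]]
              rw [(IH S hS).1 (by omega) true]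
              omega
            · by_cases hins : insert a.1 S = Finset.univ
              · have hc := congrArg Finset.card hins
                rw [Finset.card_insert_of_notMem h1, Finset.card_univ, Fintype.card_fin] at hc
                rw [hins, DS_univ_eq, auxVal_univ]
                omega
              · have hc : (insert a.1 S).card = S.card + 1 :=
                  Finset.card_insert_of_notMem h1
                by_cases h2 : m ≤ (a.2 : ℕ)
                · rw [show (false || decide (m ≤ (a.2 : ℕ))) = true by simp [h2]]
                  rw [(IH _ hins).1 (by omega) true, hc]
                  omega
                · rw [show (false || decide (m ≤ (a.2 : ℕ))) = false by simp [h2]]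
                  rw [((IH _ hins).2 (by omega)).1, hc]
                  omega

end Stmt17

/-- γ_g(H_m) = m for m ≥ 3. -/
theorem stmt17 (m : ℕ) (hm : 3 ≤ m) :
    DomGame.gammaG (Hgraph m) = m := by
  have hm1 : 1 ≤ m := by omega
  unfold DomGame.gammaG DomGame.gVal
  have hcard : Fintype.card (Fin m × Fin (m + 2)) = m * (m + 2) := by
    simp [Fintype.card_prod, Fintype.card_fin]
  have hempty : (∅ : Finset (Fin m × Fin (m + 2))) = Stmt17.DS m ∅ false := by
    ext p; simp [Stmt17.mem_DS]
  rw [hcard, hempty]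
  haveI : Nonempty (Fin m) := ⟨⟨0, by omega⟩⟩
  have hSne : (∅ : Finset (Fin m)) ≠ Finset.univ := by
    intro h
    have hmem : (⟨0, by omega⟩ : Fin m) ∈ (∅ : Finset (Fin m)) := by
      rw [h]; exact Finset.mem_univ _
    simp at hmem
  have hfuel : m - (∅ : Finset (Fin m)).card + 1 ≤ m * (m + 2) := by
    simp only [Finset.card_empty]
    have h2 : m + 1 ≤ m * (m + 2) := by nlinarith
    omega
  have h := ((Stmt17.main m hm (m * (m + 2)) ∅ hSne).2 hfuel).1
  simpa using h
end
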